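/- Let {I_j : j ∈ ω} be a partition of ω into consecutive finite intervals with |I_j| > j, let n ≤ m with n ≥ 2, let I = I_n ∪ I_{n+1} ∪ ⋯ ∪ I_m, and let T ⊆ 2^I satisfy m(T) < 1/4. Then there exists a sequence ⟨S^k : k ∈ [n,m]⟩ such that: (1) S^k ⊆ I_k for each k ∈ [n,m]; (2) |S^n| ≤ n+1 and |S^k| ≤ (k+1) · ∏_{j=n}^{k-1} 2^{|I_j|} for k ∈ (n,m]; and (3) for every function s with domain [n,m] satisfying s(j) ∈ I_j for each j, if C_s ⊆ T then s(k) ∈ S^k for some k ∈ [n,m], where C_s = {t ∈ 2^I : t(s(j)) = 0 for all j ∈ [n,m]}. -/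

import Mathlib

open Set Filter

/-! A set `A ⊆ I_k ∪ ⋯ ∪ I_m` stands for the function `t ∈ 2^I` with support `A`, so `C_s` is the
family of sets avoiding every `s j`. We induct on `k`, starting from `m + 1` and going down to `n`,
with density thresholds `δ_k = ∏_{j=k}^{m} (1 - 2^{-(j+2)})`. Note that `δ_n ≥ 1/2 > 1/4`, and a
family of density below `δ_{m+1} = 1` on the empty index set is empty.

Suppose `𝒲` has density below `δ_k`. Split every member along `I_k`. For `u ⊆ I_k`, the fiber
over `u` is heavy if its density is at least `δ_{k+1}`. Let `S^k` be the set of points `l ∈ I_k`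
such that every `u` avoiding `l` has a heavy fiber. If `S^k` had `k + 2` points, then all `u`
except a `2^{-(k+2)}` fraction would have heavy fibers, so `𝒲` would have density at least
`δ_k`. For `j > k`, let `S^j` be the union, over the at most `2^{|I_k|}` light `u`, of the sets
the induction gives for the fiber over `u`. If `s k ∉ S^k`, some light `u` avoids `s k`, and
`C_s ⊆ 𝒲` puts the cylinder of `s` over the higher blocks into the fiber over `u`. -/

open Function

namespace Finset

theorem one_sub_sum_le_prod_one_sub {ι R : Type*} [CommRing R] [LinearOrder R]
    [IsStrictOrderedRing R] (s : Finset ι) {x : ι → R} (h0 : ∀ i ∈ s, 0 ≤ x i)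
    (h1 : ∀ i ∈ s, x i ≤ 1) : 1 - ∑ i ∈ s, x i ≤ ∏ i ∈ s, (1 - x i) := by
  classical
  induction s using Finset.induction_on with
  | empty => simp
  | insert i s hi ih =>
    rw [sum_insert hi, prod_insert hi]
    have hxi0 := h0 i (mem_insert_self i s)
    have hxi1 := h1 i (mem_insert_self i s)
    have hs0 : 0 ≤ ∑ j ∈ s, x j := sum_nonneg fun j hj ↦ h0 j (mem_insert_of_mem hj)
    have hs := ih (fun j hj ↦ h0 j (mem_insert_of_mem hj)) fun j hj ↦ h1 j (mem_insert_of_mem hj)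
    nlinarith [mul_le_mul_of_nonneg_left hs (sub_nonneg.2 hxi1)]

theorem biUnion_Ico_eq_Ico {a : ℕ → ℕ} (ha : Monotone a) {k N : ℕ} (hkN : k ≤ N) :
    (Ico k N).biUnion (fun j ↦ Ico (a j) (a (j + 1))) = Ico (a k) (a N) := by
  induction N, hkN using Nat.le_induction with
  | base => simp
  | succ N hkN ih =>
    rw [Nat.Ico_succ_right_eq_insert_Ico hkN, biUnion_insert, ih, union_comm,
      Ico_union_Ico_eq_Ico (ha hkN) (ha N.le_succ)]

variable {α : Type*} [DecidableEq α]

def fiber (J : Finset α) (𝒲 : Finset (Finset α)) (u : Finset α) : Finset (Finset α) :=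
  {v ∈ J.powerset | u ∪ v ∈ 𝒲}

theorem card_eq_sum_card_fiber {I J : Finset α} (hIJ : Disjoint I J) {𝒲 : Finset (Finset α)}
    (h𝒲 : 𝒲 ⊆ (I ∪ J).powerset) : #𝒲 = ∑ u ∈ I.powerset, #(fiber J 𝒲 u) := by
  rw [card_eq_sum_card_fiberwise (f := (· ∩ I)) fun A _ ↦ mem_powerset.2 inter_subset_right]
  refine sum_congr rfl fun u hu ↦ card_nbij' (· ∩ J) (u ∪ ·) ?_ ?_ ?_ ?_
  all_goals
    simp only [Set.MapsTo, Set.LeftInvOn, Set.RightInvOn, fiber, coe_filter, mem_powerset,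
      Set.mem_ofPred_eq] at hu ⊢
  · rintro A ⟨hA, rfl⟩
    have := mem_powerset.1 (h𝒲 hA)
    refine ⟨inter_subset_right, ?_⟩
    convert hA using 1
    ext x; grind
  · rintro v ⟨hv, hv𝒲⟩
    refine ⟨hv𝒲, ?_⟩
    ext x; grind [disjoint_left]
  · rintro A ⟨hA, rfl⟩
    have := mem_powerset.1 (h𝒲 hA)
    ext x; grind
  · rintro v ⟨hv, hv𝒲⟩
    ext x; grind [disjoint_left]

theorem mul_le_sum_powerset_of_not_superset {I B : Finset α} (hB : B ⊆ I) {f : Finset α → ℝ}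
    (hf : ∀ u, 0 ≤ f u) {c : ℝ} (hc : ∀ u ⊆ I, ¬B ⊆ u → c ≤ f u) :
    2 ^ #I * (1 - 2⁻¹ ^ #B) * c ≤ ∑ u ∈ I.powerset, f u := by
  have hcount : #{u ∈ I.powerset | ¬B ⊆ u} + 2 ^ (#I - #B) = 2 ^ #I := by
    rw [← card_Icc_finset hB, Icc_eq_filter_powerset, add_comm,
      card_filter_add_card_filter_not, card_powerset]
  have hcount' : (#{u ∈ I.powerset | ¬B ⊆ u} : ℝ) = 2 ^ #I * (1 - 2⁻¹ ^ #B) := by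
    rw [mul_one_sub, inv_pow, ← pow_sub₀ (2 : ℝ) two_ne_zero (card_le_card hB),
      eq_sub_iff_add_eq]
    exact_mod_cast hcount
  calc 2 ^ #I * (1 - 2⁻¹ ^ #B) * c = #{u ∈ I.powerset | ¬B ⊆ u} • c := by
        rw [nsmul_eq_mul, hcount']
    _ ≤ ∑ u ∈ I.powerset with ¬B ⊆ u, f u :=
        card_nsmul_le_sum _ _ _ fun u hu ↦ by
          rw [mem_filter, mem_powerset] at hu; exact hc u hu.1 hu.2
    _ ≤ ∑ u ∈ I.powerset, f u :=
        sum_le_sum_of_subset_of_nonneg (filter_subset _ _) fun u _ _ ↦ hf u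

theorem card_filter_forall_heavy_fiber_le {I J : Finset α} (hIJ : Disjoint I J)
    {𝒲 : Finset (Finset α)} (h𝒲 : 𝒲 ⊆ (I ∪ J).powerset) {r : ℕ} {δ : ℝ}
    (hcard : (#𝒲 : ℝ) < 2 ^ #(I ∪ J) * ((1 - 2⁻¹ ^ (r + 1)) * δ)) :
    #{l ∈ I | ∀ u ⊆ I, l ∉ u → 2 ^ #J * δ ≤ #(fiber J 𝒲 u)} ≤ r := by
  by_contra! hr
  obtain ⟨B, hBsub, hBcard⟩ := exists_subset_card_eq (n := r + 1) hr
  have hheavy : ∀ u ⊆ I, ¬B ⊆ u → 2 ^ #J * δ ≤ #(fiber J 𝒲 u) := fun u hu hBu ↦ by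
    obtain ⟨l, hlB, hlu⟩ := not_subset.1 hBu
    exact (mem_filter.1 (hBsub hlB)).2 u hu hlu
  have hsum := mul_le_sum_powerset_of_not_superset (hBsub.trans (filter_subset _ _))
    (fun u ↦ Nat.cast_nonneg _) hheavy
  rw [← Nat.cast_sum, ← card_eq_sum_card_fiber hIJ h𝒲, hBcard] at hsum
  rw [card_union_of_disjoint hIJ, pow_add] at hcard
  linarith

end Finset

theorem card_le_ncard_of_forall_indicator_mem {α : Type*} [DecidableEq α] {U : Finset α}
    {T : Set (α → Bool)} (hT : ∀ t ∈ T, ∀ i ∉ U, t i = false) {𝒲 : Finset (Finset α)}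
    (h𝒲 : ∀ A ∈ 𝒲, (fun i ↦ decide (i ∈ A)) ∈ T) : 𝒲.card ≤ T.ncard := by
  have hfin : T.Finite := (U.powerset.finite_toSet.image fun A i ↦ decide (i ∈ A)).subset
    fun t ht ↦ ⟨U.filter (t ·), Finset.mem_coe.2 (Finset.mem_powerset.2 (Finset.filter_subset _ _)),
      funext fun i ↦ by by_cases hi : i ∈ U <;> simp [hi, hT t ht]⟩
  rw [← Set.ncard_coe_finset]
  exact Set.ncard_le_ncard_of_injOn (fun A i ↦ decide (i ∈ A)) h𝒲
    (fun A _ B _ h ↦ Finset.ext fun i ↦ by simpa using congrFun h i) hfin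

theorem half_le_prod_one_sub_inv_two_pow (n N : ℕ) :
    1 / 2 ≤ ∏ j ∈ Finset.Ico n N, (1 - (2 : ℝ)⁻¹ ^ (j + 1 + 1)) := by
  have hgeom : ∑ j ∈ Finset.Ico n N, (2 : ℝ)⁻¹ ^ (j + 1 + 1) ≤ 1 / 2 := by
    calc ∑ j ∈ Finset.Ico n N, (2 : ℝ)⁻¹ ^ (j + 1 + 1)
        = 2⁻¹ ^ 2 * ∑ j ∈ Finset.Ico n N, (2 : ℝ)⁻¹ ^ j := by
          rw [Finset.mul_sum]; exact Finset.sum_congr rfl fun j _ ↦ by ring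
      _ ≤ 2⁻¹ ^ 2 * ((2 : ℝ)⁻¹ ^ n / (1 - 2⁻¹)) := by
          gcongr; exact geom_sum_Ico_le_of_lt_one (by norm_num) (by norm_num)
      _ ≤ 1 / 2 := by
          have : (2 : ℝ)⁻¹ ^ n ≤ 1 := pow_le_one₀ (by norm_num) (by norm_num)
          norm_num; linarith
  refine le_trans ?_ (Finset.one_sub_sum_le_prod_one_sub _ (fun j _ ↦ by positivity)
    fun j _ ↦ pow_le_one₀ (by norm_num) (by norm_num))
  linarith

section Transversals

open Finset

variable {α : Type*} [DecidableEq α] {I : ℕ → Finset α} {b : ℕ → ℕ}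

variable (I) in
/-- The paper's `C_s` on the blocks `I j`, `j ∈ [k, N)`. -/
def cylinder (k N : ℕ) (s : ℕ → α) : Finset (Finset α) :=
  {A ∈ ((Finset.Ico k N).biUnion I).powerset | ∀ j ∈ Finset.Ico k N, s j ∉ A}

variable (I b) in
def IsSmallTransversal (k N : ℕ) (𝒲 : Finset (Finset α)) (S : ℕ → Finset α) : Prop :=
  (∀ j ∈ Finset.Ico k N, S j ⊆ I j) ∧
  (∀ j ∈ Finset.Ico k N, #(S j) ≤ b j * ∏ i ∈ Finset.Ico k j, 2 ^ #(I i)) ∧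
  ∀ s : ℕ → α, (∀ j ∈ Finset.Ico k N, s j ∈ I j) → cylinder I k N s ⊆ 𝒲 →
    ∃ j ∈ Finset.Ico k N, s j ∈ S j

variable (I b) in
def HasSmallTransversals (k N : ℕ) : Prop :=
  ∀ 𝒲 : Finset (Finset α), 𝒲 ⊆ ((Finset.Ico k N).biUnion I).powerset →
    (#𝒲 : ℝ) < 2 ^ #((Finset.Ico k N).biUnion I) * ∏ j ∈ Finset.Ico k N, (1 - 2⁻¹ ^ (b j + 1)) →
    ∃ S, IsSmallTransversal I b k N 𝒲 S

theorem hasSmallTransversals_of_le {k N : ℕ} (hNk : N ≤ k) : HasSmallTransversals I b k N := by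
  intro 𝒲 _ hcard
  simp only [Finset.Ico_eq_empty_of_le hNk, Finset.biUnion_empty, Finset.card_empty, pow_zero,
    Finset.prod_empty, mul_one, Nat.cast_lt_one, Finset.card_eq_zero] at hcard
  subst hcard
  refine ⟨fun _ ↦ ∅, by simp, by simp, fun s _ hC ↦ ?_⟩
  have : ∅ ∈ cylinder I k N s := by simp [cylinder, Finset.Ico_eq_empty_of_le hNk]
  exact (Finset.notMem_empty _ (hC this)).elim

theorem biUnion_Ico_eq_union_of_lt {k N : ℕ} (hk : k < N) :
    (Finset.Ico k N).biUnion I = I k ∪ (Finset.Ico (k + 1) N).biUnion I := by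
  rw [← Finset.insert_Ico_add_one_left_eq_Ico hk, Finset.biUnion_insert]

theorem disjoint_biUnion_Ico_succ (hI : Pairwise (Disjoint on I)) (k N : ℕ) :
    Disjoint (I k) ((Finset.Ico (k + 1) N).biUnion I) :=
  disjoint_biUnion_right _ _ _ |>.2 fun j hj ↦ hI (by rw [Finset.mem_Ico] at hj; omega)

theorem cylinder_subset_fiber (hI : Pairwise (Disjoint on I)) {k N : ℕ} (hk : k < N)
    {s : ℕ → α} (hs : ∀ j ∈ Finset.Ico k N, s j ∈ I j) {u : Finset α} (hu : u ⊆ I k)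
    (hsu : s k ∉ u) {𝒲 : Finset (Finset α)} (hC : cylinder I k N s ⊆ 𝒲) :
    cylinder I (k + 1) N s ⊆ fiber ((Finset.Ico (k + 1) N).biUnion I) 𝒲 u := by
  intro A hA
  simp only [cylinder, mem_filter, Finset.mem_powerset] at hA
  refine mem_filter.2 ⟨Finset.mem_powerset.2 hA.1, hC (mem_filter.2 ⟨?_, fun j hj ↦ ?_⟩)⟩
  · rw [biUnion_Ico_eq_union_of_lt hk, Finset.mem_powerset]
    exact Finset.union_subset_union hu hA.1
  rw [Finset.notMem_union]
  by_cases hjk : j = k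
  · subst hjk
    exact ⟨hsu, fun h ↦ disjoint_left.1 (disjoint_biUnion_Ico_succ hI j N) (hs j hj) (hA.1 h)⟩
  · have hj' : j ∈ Finset.Ico (k + 1) N := by rw [Finset.mem_Ico] at hj ⊢; omega
    exact ⟨fun h ↦ disjoint_left.1 (hI hjk) (hs j hj) (hu h), hA.2 j hj'⟩

theorem IsSmallTransversal.of_fibers (hI : Pairwise (Disjoint on I)) {k N : ℕ} (hk : k < N)
    {𝒲 : Finset (Finset α)} {B : Finset α} (hBI : B ⊆ I k) (hBcard : #B ≤ b k)
    {G : Finset (Finset α)} (hG : G ⊆ (I k).powerset) {T : Finset α → ℕ → Finset α}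
    (hT : ∀ u ∈ G,
      IsSmallTransversal I b (k + 1) N (fiber ((Finset.Ico (k + 1) N).biUnion I) 𝒲 u) (T u))
    (hBG : ∀ l ∈ I k, l ∉ B → ∃ u ∈ G, l ∉ u) :
    IsSmallTransversal I b k N 𝒲 fun j ↦ if j = k then B else G.biUnion (T · j) := by
  have hkN : k ∈ Finset.Ico k N := Finset.mem_Ico.2 ⟨le_rfl, hk⟩
  have hsucc : ∀ {j}, j ∈ Finset.Ico k N → j ≠ k → j ∈ Finset.Ico (k + 1) N := fun hj hjk ↦ by
    rw [Finset.mem_Ico] at hj ⊢; omega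
  refine ⟨fun j hj ↦ ?_, fun j hj ↦ ?_, fun s hs hC ↦ ?_⟩
  · dsimp only
    split_ifs with hjk
    · exact hjk ▸ hBI
    · exact biUnion_subset.2 fun u hu ↦ (hT u hu).1 j (hsucc hj hjk)
  · dsimp only
    split_ifs with hjk
    · simpa [hjk] using hBcard
    have hkj : k < j := (Finset.mem_Ico.1 (hsucc hj hjk)).1
    calc #(G.biUnion (T · j)) ≤ #G * (b j * ∏ i ∈ Finset.Ico (k + 1) j, 2 ^ #(I i)) :=
          card_biUnion_le_card_mul _ _ _ fun u hu ↦ (hT u hu).2.1 j (hsucc hj hjk)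
      _ ≤ 2 ^ #(I k) * (b j * ∏ i ∈ Finset.Ico (k + 1) j, 2 ^ #(I i)) := by
          gcongr
          exact (Finset.card_le_card hG).trans (Finset.card_powerset _).le
      _ = b j * ∏ i ∈ Finset.Ico k j, 2 ^ #(I i) := by
          rw [Finset.prod_eq_prod_Ico_succ_bot hkj]; ring
  · by_cases hsk : s k ∈ B
    · exact ⟨k, hkN, by simpa using hsk⟩
    obtain ⟨u, huG, hsku⟩ := hBG (s k) (hs k hkN) hsk
    have hsI : ∀ j ∈ Finset.Ico (k + 1) N, s j ∈ I j :=
      fun j hj ↦ hs j (Finset.Ico_subset_Ico_left k.le_succ hj)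
    have hu : u ⊆ I k := Finset.mem_powerset.1 (hG huG)
    obtain ⟨j, hj, hsj⟩ := (hT u huG).2.2 s hsI (cylinder_subset_fiber hI hk hs hu hsku hC)
    have hjk : j ≠ k := by rintro rfl; simp at hj
    refine ⟨j, Finset.Ico_subset_Ico_left k.le_succ hj, ?_⟩
    simpa only [hjk, if_false] using mem_biUnion.2 ⟨u, huG, hsj⟩

theorem HasSmallTransversals.of_succ (hI : Pairwise (Disjoint on I)) {k N : ℕ} (hk : k < N)
    (ih : HasSmallTransversals I b (k + 1) N) : HasSmallTransversals I b k N := by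
  intro 𝒲 h𝒲 hcard
  set J := (Finset.Ico (k + 1) N).biUnion I
  set δ : ℝ := ∏ j ∈ Finset.Ico (k + 1) N, (1 - 2⁻¹ ^ (b j + 1))
  rw [biUnion_Ico_eq_union_of_lt hk] at h𝒲 hcard
  rw [Finset.prod_eq_prod_Ico_succ_bot hk] at hcard
  choose! T hT using fun u (hu : (#(fiber J 𝒲 u) : ℝ) < 2 ^ #J * δ) ↦
    ih (fiber J 𝒲 u) (filter_subset _ _) hu
  set B := {l ∈ I k | ∀ u ⊆ I k, l ∉ u → 2 ^ #J * δ ≤ #(fiber J 𝒲 u)}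
  set G := {u ∈ (I k).powerset | (#(fiber J 𝒲 u) : ℝ) < 2 ^ #J * δ}
  have hBcard : #B ≤ b k :=
    card_filter_forall_heavy_fiber_le (disjoint_biUnion_Ico_succ hI k N) h𝒲 hcard
  refine ⟨_, IsSmallTransversal.of_fibers hI hk (filter_subset _ _) hBcard (filter_subset _ _)
    (fun u hu ↦ hT u (mem_filter.1 hu).2) fun l hl hlB ↦ ?_⟩
  obtain ⟨u, hu, hlu, hlight⟩ : ∃ u ⊆ I k, l ∉ u ∧ (#(fiber J 𝒲 u) : ℝ) < 2 ^ #J * δ := by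
    simpa [B, hl] using hlB
  exact ⟨u, mem_filter.2 ⟨Finset.mem_powerset.2 hu, hlight⟩, hlu⟩

variable (b) in
theorem hasSmallTransversals (hI : Pairwise (Disjoint on I)) (k N : ℕ) :
    HasSmallTransversals I b k N := by
  induction h : N - k generalizing k with
  | zero => exact hasSmallTransversals_of_le (by omega)
  | succ d ih => exact .of_succ hI (by omega) (ih (k + 1) (by omega))

end Transversals

theorem exists_small_transversal_sets
    (a : ℕ → ℕ) (hmono : StrictMono a)
    (n m : ℕ) (hnm : n ≤ m)
    (T : Set (ℕ → Bool))
    (hTsupp : ∀ t ∈ T, ∀ i, (i < a n ∨ a (m+1) ≤ i) → t i = false)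
    (hT : (T.ncard : ℝ) / 2 ^ (a (m+1) - a n) < 1/4) :
    ∃ S : ℕ → Finset ℕ,
      (∀ k, n ≤ k → k ≤ m → ∀ l ∈ S k, a k ≤ l ∧ l < a (k+1)) ∧
      (S n).card ≤ n + 1 ∧
      (∀ k, n < k → k ≤ m →
        (S k).card ≤ (k+1) * ∏ j ∈ Finset.Ico n k, 2 ^ (a (j+1) - a j)) ∧
      ∀ s : ℕ → ℕ, (∀ j, n ≤ j → j ≤ m → a j ≤ s j ∧ s j < a (j+1)) →
        (∀ t : ℕ → Bool, (∀ i, (i < a n ∨ a (m+1) ≤ i) → t i = false) →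
          (∀ j, n ≤ j → j ≤ m → t (s j) = false) → t ∈ T) →
        ∃ k, n ≤ k ∧ k ≤ m ∧ s k ∈ S k := by
  classical
  set I : ℕ → Finset ℕ := fun j ↦ Finset.Ico (a j) (a (j + 1))
  have hU : (Finset.Ico n (m + 1)).biUnion I = Finset.Ico (a n) (a (m + 1)) :=
    Finset.biUnion_Ico_eq_Ico hmono.monotone (by omega)
  have hI : Pairwise (Disjoint on I) := fun i j hij ↦ by
    simpa [I, ← Finset.disjoint_coe] using hmono.monotone.pairwise_disjoint_on_Ico_succ hij
  set 𝒲 := {A ∈ (Finset.Ico (a n) (a (m + 1))).powerset | (fun i ↦ decide (i ∈ A)) ∈ T}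
  have hcard : (𝒲.card : ℝ) < 2 ^ ((Finset.Ico n (m + 1)).biUnion I).card *
      ∏ j ∈ Finset.Ico n (m + 1), (1 - 2⁻¹ ^ (j + 1 + 1)) := by
    have h𝒲T : 𝒲.card ≤ T.ncard :=
      card_le_ncard_of_forall_indicator_mem (U := Finset.Ico (a n) (a (m + 1)))
        (fun t ht i hi ↦ hTsupp t ht i (by rw [Finset.mem_Ico] at hi; omega))
        fun A hA ↦ (Finset.mem_filter.1 hA).2
    rw [div_lt_iff₀ (by positivity)] at hT
    rw [hU, Nat.card_Ico]
    nlinarith [half_le_prod_one_sub_inv_two_pow n (m + 1), (Nat.cast_le (α := ℝ)).2 h𝒲T,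
      pow_pos (two_pos (α := ℝ)) (a (m + 1) - a n)]
  obtain ⟨S, hSI, hScard, hScover⟩ := hasSmallTransversals (· + 1) hI n (m + 1) 𝒲
    (hU ▸ Finset.filter_subset _ _) hcard
  refine ⟨S, fun k hnk hkm l hl ↦ ?_, ?_, fun k hnk hkm ↦ ?_, fun s hs hC ↦ ?_⟩
  · exact Finset.mem_Ico.1 (hSI k (Finset.mem_Ico.2 ⟨hnk, by omega⟩) hl)
  · simpa using hScard n (Finset.mem_Ico.2 ⟨le_rfl, by omega⟩)
  · simpa [I] using hScard k (Finset.mem_Ico.2 ⟨hnk.le, by omega⟩)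
  have hsI : ∀ j ∈ Finset.Ico n (m + 1), s j ∈ I j := fun j hj ↦ by
    rw [Finset.mem_Ico] at hj; exact Finset.mem_Ico.2 (hs j hj.1 (by omega))
  have hC𝒲 : cylinder I n (m + 1) s ⊆ 𝒲 := fun A hA ↦ by
    simp only [cylinder, hU, Finset.mem_filter, Finset.mem_powerset, Finset.mem_Ico] at hA
    refine Finset.mem_filter.2 ⟨Finset.mem_powerset.2 hA.1, hC _ (fun i hi ↦ ?_) fun j hnj hjm ↦ ?_⟩
    · exact decide_eq_false fun (h : i ∈ A) ↦ by have := Finset.mem_Ico.1 (hA.1 h); omega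
    · exact decide_eq_false (hA.2 j ⟨hnj, by omega⟩)
  obtain ⟨k, hk, hsk⟩ := hScover s hsI hC𝒲
  rw [Finset.mem_Ico] at hk
  exact ⟨k, hk.1, by omega, hsk⟩
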